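/- arXiv:1208.5691 — 3 statements merged into one kernel-verified Lean document; each statement's English description precedes it below -/
import Mathlib

section
/- Let (X,Y) be a t-structure in a Krull–Schmidt k-linear triangulated category T, and let x₁ ⊕ x₂ →[f₁ f₂] t → y → Σ(x₁⊕x₂) be the truncation triangle of an object t, with x₁, x₂ ≠ 0. Form the octahedron over the composition x₁ → x₁ ⊕ x₂ → t, giving a distinguished triangle x₂ →g u → y with u the cone of f₁ : x₁ → t. Then the map g : x₂ → u is non-zero. -/
/-!
If `g = 0`, then `s : y ⟶ x₂⟦1⟧` is a split epimorphism. Its section is a map from `x₂⟦1⟧`, a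
retract of `(x₁ ⊞ x₂)⟦1⟧ ∈ X`, to `y ∈ Y`, hence zero; so `x₂⟦1⟧ = 0`, and then `x₂ = 0`.
-/

open CategoryTheory Limits Pretriangulated

universe v u

/-- A t-structure in a triangulated category `C`: a pair of strictly full (i.e. closed
under isomorphism) subcategories `(X, Y)` with `ΣX ⊆ X`, `Hom(X, Y) = 0` and truncation
triangles for every object. -/
structure TStruct (C : Type u) [Category.{v} C] [Preadditive C] [HasZeroObject C]
    [HasShift C ℤ] [∀ n : ℤ, (shiftFunctor C n).Additive] [Pretriangulated C] where
  X : Set C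
  Y : Set C
  X_iso : ∀ ⦃a b : C⦄, (a ≅ b) → a ∈ X → b ∈ X
  Y_iso : ∀ ⦃a b : C⦄, (a ≅ b) → a ∈ Y → b ∈ Y
  shift_mem : ∀ x ∈ X, x⟦(1 : ℤ)⟧ ∈ X
  hom_zero : ∀ ⦃x⦄, x ∈ X → ∀ ⦃y⦄, y ∈ Y → ∀ f : x ⟶ y, f = 0
  trunc : ∀ t : C, ∃ (x y : C) (f : x ⟶ t) (g : t ⟶ y) (h : y ⟶ x⟦(1 : ℤ)⟧),
    x ∈ X ∧ y ∈ Y ∧ Triangle.mk f g h ∈ distTriang C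

section

variable {C : Type u} [Category.{v} C] [Preadditive C] [HasZeroObject C] [HasShift C ℤ]
  [∀ n : ℤ, (CategoryTheory.shiftFunctor C n).Additive] [Pretriangulated C]

lemma TStruct.hom_eq_zero_of_retract (S : TStruct C) {a b y : C} (h : Retract b a)
    (ha : a ∈ S.X) (hy : y ∈ S.Y) (f : b ⟶ y) : f = 0 := by
  rw [← Category.id_comp f, ← h.retract, Category.assoc, S.hom_zero ha hy (h.r ≫ f), comp_zero]

lemma CategoryTheory.Pretriangulated.Triangle.isZero₁_of_mor₁_eq_zero_of_hom_eq_zero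
    (T : Triangle C) (hT : T ∈ distTriang C) (h₁ : T.mor₁ = 0)
    (hhom : ∀ f : T.obj₁⟦(1 : ℤ)⟧ ⟶ T.obj₃, f = 0) :
    IsZero T.obj₁ := by
  have := Triangle.epi₃ _ hT h₁
  have := isSplitEpi_of_epi T.mor₃
  have hshift : IsZero (T.obj₁⟦(1 : ℤ)⟧) := by
    rw [IsZero.iff_id_eq_zero, ← IsSplitEpi.id T.mor₃, hhom (section_ T.mor₃), zero_comp]
  exact (Triangle.isZero₁_iff _ hT).2 ⟨h₁, hshift.eq_of_tgt _ _⟩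

end

/-- Given the truncation triangle `x₁ ⊞ x₂ →[f₁ f₂] t → y → Σ(x₁ ⊞ x₂)` of `t` with
`x₁, x₂ ≠ 0`, and the octahedron over `x₁ → x₁ ⊞ x₂ → t` producing a distinguished
triangle `x₂ →g u → y` (where `u` is the cone of `f₁`), the map `g : x₂ → u` is
non-zero. -/
theorem octahedron_map_nonzero {C : Type u} [Category.{v} C] [Preadditive C]
    [HasZeroObject C] [HasShift C ℤ] [∀ n : ℤ, (shiftFunctor C n).Additive]
    [Pretriangulated C] [HasBinaryBiproducts C] (S : TStruct C)
    {x₁ x₂ t y u : C} (f₁ : x₁ ⟶ t) (f₂ : x₂ ⟶ t) (gy : t ⟶ y)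
    (hy' : y ⟶ (x₁ ⊞ x₂)⟦(1 : ℤ)⟧)
    (hT : Triangle.mk (biprod.desc f₁ f₂) gy hy' ∈ distTriang C)
    (hx : (x₁ ⊞ x₂) ∈ S.X) (hy : y ∈ S.Y)
    (hx₁ : ¬ IsZero x₁) (hx₂ : ¬ IsZero x₂)
    -- the cone of `f₁`:
    (p : t ⟶ u) (q : u ⟶ x₁⟦(1 : ℤ)⟧)
    (hTu : Triangle.mk f₁ p q ∈ distTriang C)
    -- the octahedral triangle `x₂ → u → y`:
    (g : x₂ ⟶ u) (r : u ⟶ y) (s : y ⟶ x₂⟦(1 : ℤ)⟧)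
    (hTo : Triangle.mk g r s ∈ distTriang C)
    -- compatibilities from the octahedron:
    (hcomm₁ : biprod.desc f₁ f₂ ≫ p = biprod.snd ≫ g)
    (hcomm₂ : p ≫ r = gy) :
    g ≠ 0 := by
  intro hg
  have hsummand : Retract (x₂⟦(1 : ℤ)⟧) ((x₁ ⊞ x₂)⟦(1 : ℤ)⟧) :=
    (BinaryBiproduct.bicone x₁ x₂).retract_right.map (shiftFunctor C (1 : ℤ))
  exact hx₂ (Triangle.isZero₁_of_mor₁_eq_zero_of_hom_eq_zero _ hTo hg
    (S.hom_eq_zero_of_retract hsummand (S.shift_mem _ hx) hy))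
end

section
/- Let (X,Y) be a t-structure in a Krull–Schmidt k-linear triangulated category T, and let x₁ ⊕ x₂ → t → y → Σ(x₁⊕x₂) be the truncation triangle of an object t with x₁ indecomposable and nonzero. If dim_k Hom_T(x₁, t) = 1, then the multiplicity of x₁ as a direct summand of x₁ ⊕ x₂ is exactly one, i.e. x₁ is not a direct summand of x₂. -/
/-!
Since `Hom(X, Y) = 0` and `ΣX ⊆ X`, the long exact `Hom(x₁, -)` sequence of the truncation
triangle shows that composing with `x₁ ⊞ x₂ ⟶ t` is an isomorphism
`Hom(x₁, x₁ ⊞ x₂) ≅ Hom(x₁, t)`; this only uses that `x₁` is a retract of an object of `X`.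
So `Hom(x₁, x₁ ⊞ x₂)` is one-dimensional, whereas a split mono `s : x₁ ⟶ x₂` would make
`biprod.inl` and `s ≫ biprod.inr` linearly independent in it.
-/

open CategoryTheory Limits Pretriangulated

universe v u

namespace TStruct

variable {C : Type u} [Category.{v} C] [Preadditive C] [HasZeroObject C] [HasShift C ℤ]
  [∀ n : ℤ, (shiftFunctor C n).Additive] [Pretriangulated C] (S : TStruct C)

lemma hom_eq_zero_of_retract_s9 {w a c : C} (e : Retract w a) (ha : a ∈ S.X) (hc : c ∈ S.Y)
    (φ : w ⟶ c) : φ = 0 := by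
  rw [← Category.id_comp φ, ← e.retract, Category.assoc, S.hom_zero ha hc (e.r ≫ φ), comp_zero]

section Triangle

variable {a b c : C} {f : a ⟶ b} {g : b ⟶ c} {h : c ⟶ a⟦(1 : ℤ)⟧}
  (hT : Triangle.mk f g h ∈ distTriang C) (hc : c ∈ S.Y)
  {w a' : C} (e : Retract w a') (ha' : a' ∈ S.X)
include hT hc e ha'

lemma eq_zero_of_comp_eq_zero_of_retract (u : w ⟶ a) (hu : u ≫ f = 0) : u = 0 := by
  -- After shifting, `u` factors through `h` via a map `w⟦1⟧ ⟶ c`, which vanishes.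
  have hu₁ : u⟦(1 : ℤ)⟧' ≫ f⟦(1 : ℤ)⟧' = 0 := by
    rw [← Functor.map_comp, hu, Functor.map_zero]
  obtain ⟨φ, hφ⟩ := Triangle.coyoneda_exact₁ _ hT _ hu₁
  have hφ0 : φ = 0 :=
    S.hom_eq_zero_of_retract_s9 (e.map (shiftFunctor C (1 : ℤ))) (S.shift_mem _ ha') hc φ
  rw [hφ0, zero_comp] at hφ
  exact (Functor.map_eq_zero_iff (shiftFunctor C (1 : ℤ))).1 hφ

lemma exists_comp_eq_of_retract (φ : w ⟶ b) : ∃ ψ : w ⟶ a, ψ ≫ f = φ := by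
  obtain ⟨ψ, hψ⟩ := Triangle.coyoneda_exact₂ _ hT φ (S.hom_eq_zero_of_retract_s9 e ha' hc _)
  exact ⟨ψ, hψ.symm⟩

lemma finrank_hom_eq_of_retract (k : Type*) [Field k] [Linear k C] :
    Module.finrank k (w ⟶ a) = Module.finrank k (w ⟶ b) :=
  (LinearEquiv.ofBijective (Linear.rightComp k w f)
    ⟨(injective_iff_map_eq_zero _).2 (S.eq_zero_of_comp_eq_zero_of_retract hT hc e ha'),
      S.exists_comp_eq_of_retract hT hc e ha'⟩).finrank_eq

end Triangle

end TStruct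

lemma finrank_hom_biprod_ne_one_of_retract {C : Type u} [Category.{v} C] [Preadditive C]
    [HasBinaryBiproducts C] (k : Type*) [Field k] [Linear k C] {x₁ x₂ : C}
    (hx₁ : ¬ IsZero x₁) (e : Retract x₁ x₂) : Module.finrank k (x₁ ⟶ x₁ ⊞ x₂) ≠ 1 := by
  intro hrank
  -- `biprod.inl` and `e.i ≫ biprod.inr` cannot be proportional: `biprod.fst` kills only one.
  have hid : 𝟙 x₁ ≠ 0 := fun h0 => hx₁ ((IsZero.iff_id_eq_zero x₁).2 h0)
  have hne : e.i ≫ (biprod.inr : x₂ ⟶ x₁ ⊞ x₂) ≠ 0 := fun h0 => hid <| by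
    simpa using congrArg (· ≫ biprod.snd ≫ e.r) h0
  obtain ⟨c, hc⟩ := (finrank_eq_one_iff_of_nonzero' _ hne).1 hrank biprod.inl
  exact hid <| by simpa using (congrArg (· ≫ biprod.fst) hc).symm

/-- In a Krull–Schmidt k-linear triangulated category, if `x₁ ⊞ x₂ → t → y → Σ(x₁ ⊞ x₂)`
is the truncation triangle of `t`, `x₁` is indecomposable and `dim_k Hom(x₁, t) = 1`,
then `x₁` occurs with multiplicity one in `x₁ ⊞ x₂`, i.e. `x₁` is not a direct summand
of `x₂`. -/
theorem summand_multiplicity_one {C : Type u} [Category.{v} C] [Preadditive C]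
    [HasZeroObject C] [HasShift C ℤ] [∀ n : ℤ, (shiftFunctor C n).Additive]
    [Pretriangulated C] [HasFiniteBiproducts C]
    (k : Type*) [Field k] [Linear k C]
    -- Krull–Schmidt hypotheses:
    (hdecomp : ∀ z : C, ∃ (n : ℕ) (f : Fin n → C),
      (∀ i, Indecomposable (f i)) ∧ Nonempty (z ≅ ⨁ f))
    (hlocal : ∀ z : C, Indecomposable z → IsLocalRing (End z))
    (S : TStruct C)
    {x₁ x₂ t y : C} (f₁ : x₁ ⟶ t) (f₂ : x₂ ⟶ t) (g : t ⟶ y)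
    (h : y ⟶ (x₁ ⊞ x₂)⟦(1 : ℤ)⟧)
    (hT : Triangle.mk (biprod.desc f₁ f₂) g h ∈ distTriang C)
    (hx : (x₁ ⊞ x₂) ∈ S.X) (hy : y ∈ S.Y)
    (hx₁ : Indecomposable x₁)
    (hdim : Module.finrank k (x₁ ⟶ t) = 1) :
    ¬ ∃ (s : x₁ ⟶ x₂) (p : x₂ ⟶ x₁), s ≫ p = 𝟙 x₁ := by
  rintro ⟨s, p, hsp⟩
  have hrank := S.finrank_hom_eq_of_retract hT hy
    ⟨biprod.inl, biprod.fst, biprod.inl_fst⟩ hx k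
  exact finrank_hom_biprod_ne_one_of_retract k hx₁.1 ⟨s, p, hsp⟩ (hrank.trans hdim)
end

section
/- Let G be a finite group acting on a triangulated category T (an action assigns to each g ∈ G an autoequivalence, compatibly with products), and let (X,Y) be a G-invariant t-structure, i.e. g(X) = X and g(Y) = Y for all g ∈ G. Then the pair (X^G, Y^G) of G-equivariant subcategories is a t-structure on the equivariant category T^G (assuming T^G is triangulated, e.g. T algebraic and char k = 0): Hom_{T^G}(X^G, Y^G) = 0, ΣX^G ⊆ X^G, and every G-object (t,τ) admits a truncation triangle (x,ξ) → (t,τ) → (y,μ) with (x,ξ) ∈ X^G and (y,μ) ∈ Y^G, where ξ and μ are the canonical linearisations induced by uniqueness of truncation triangles. -/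
/-!
Applying `g` to a truncation triangle `x → t → y` of a `G`-object `(t, τ)` gives a distinguished
triangle `g x → g t → g y` with `g x ∈ X`, `g y ∈ Y`; since maps from `X` to a truncation
triangle factor uniquely through its `X`-part (dually for `Y`), `τ_g : t ≅ g t` induces
isomorphisms `ξ_g : x ≅ g x` and `μ_g : y ≅ g y`, and the same uniqueness transports the cocycle
condition from `τ` to `ξ` and `μ`. The suspension of a `G`-object is linearised by transporting
`τ` along the shift, which commutes with the action.
-/

open CategoryTheory Limits Pretriangulated

universe v u

variable {C : Type u} [Category.{v} C] [Preadditive C] [HasZeroObject C]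
  [HasShift C ℤ] [∀ n : ℤ, (shiftFunctor C n).Additive] [Pretriangulated C]

namespace TStruct

variable (S : TStruct C)

lemma hom_to_shift_neg_one_eq_zero {x y : C} (hx : x ∈ S.X) (hy : y ∈ S.Y)
    (g : x ⟶ y⟦(-1 : ℤ)⟧) : g = 0 := by
  have hy' : (y⟦(-1 : ℤ)⟧)⟦(1 : ℤ)⟧ ∈ S.Y :=
    S.Y_iso ((shiftFunctorCompIsoId C (-1 : ℤ) (1 : ℤ) (by norm_num)).app y).symm hy
  have hg : (shiftFunctor C (1 : ℤ)).map g = 0 := S.hom_zero (S.shift_mem x hx) hy' _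
  exact (shiftFunctor C (1 : ℤ)).map_injective (by simpa using hg)

section Factor

variable {x t y : C} {f : x ⟶ t} {p : t ⟶ y} {q : y ⟶ x⟦(1 : ℤ)⟧}
  (hT : Triangle.mk f p q ∈ distTriang C)
include hT

lemma exists_factor_truncX {x' : C} (hx' : x' ∈ S.X) (hy : y ∈ S.Y) (u : x' ⟶ t) :
    ∃ a : x' ⟶ x, a ≫ f = u := by
  obtain ⟨a, ha⟩ := Triangle.coyoneda_exact₂ _ hT u (S.hom_zero hx' hy (u ≫ p))
  exact ⟨a, ha.symm⟩

lemma ext_truncX {x' : C} (hx' : x' ∈ S.X) (hy : y ∈ S.Y) {a b : x' ⟶ x}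
    (hab : a ≫ f = b ≫ f) : a = b := by
  obtain ⟨c, hc⟩ := Triangle.coyoneda_exact₂ _ (inv_rot_of_distTriang _ hT) (a - b)
    (show (a - b) ≫ f = 0 by rw [Preadditive.sub_comp, hab, sub_self])
  rw [S.hom_to_shift_neg_one_eq_zero hx' hy c] at hc
  exact sub_eq_zero.mp (hc.trans zero_comp)

lemma exists_factor_truncY {y' : C} (hx : x ∈ S.X) (hy' : y' ∈ S.Y) (u : t ⟶ y') :
    ∃ b : y ⟶ y', p ≫ b = u := by
  obtain ⟨b, hb⟩ := Triangle.yoneda_exact₂ _ hT u (S.hom_zero hx hy' (f ≫ u))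
  exact ⟨b, hb.symm⟩

lemma ext_truncY {y' : C} (hx : x ∈ S.X) (hy' : y' ∈ S.Y) {a b : y ⟶ y'}
    (hab : p ≫ a = p ≫ b) : a = b := by
  obtain ⟨c, hc⟩ := Triangle.yoneda_exact₃ _ hT (a - b)
    (show p ≫ (a - b) = 0 by rw [Preadditive.comp_sub, hab, sub_self])
  rw [S.hom_zero (S.shift_mem x hx) hy' c] at hc
  exact sub_eq_zero.mp (hc.trans comp_zero)

end Factor

section Iso

variable {x t y x' t' y' : C} {f : x ⟶ t} {p : t ⟶ y} {q : y ⟶ x⟦(1 : ℤ)⟧}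
  {f' : x' ⟶ t'} {p' : t' ⟶ y'} {q' : y' ⟶ x'⟦(1 : ℤ)⟧}
  (hT : Triangle.mk f p q ∈ distTriang C) (hT' : Triangle.mk f' p' q' ∈ distTriang C)
  (hx : x ∈ S.X) (hy : y ∈ S.Y) (hx' : x' ∈ S.X) (hy' : y' ∈ S.Y)
include hT hT' hx hy hx' hy'

lemma exists_iso_truncX (e : t ≅ t') : ∃ a : x ≅ x', a.hom ≫ f' = f ≫ e.hom := by
  obtain ⟨a, ha⟩ := S.exists_factor_truncX hT' hx hy' (f ≫ e.hom)
  obtain ⟨b, hb⟩ := S.exists_factor_truncX hT hx' hy (f' ≫ e.inv)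
  refine ⟨⟨a, b, S.ext_truncX hT hx hy ?_, S.ext_truncX hT' hx' hy' ?_⟩, ha⟩
  · simp [hb, reassoc_of% ha]
  · simp [ha, reassoc_of% hb]

lemma exists_iso_truncY (e : t ≅ t') : ∃ b : y ≅ y', p ≫ b.hom = e.hom ≫ p' := by
  obtain ⟨a, ha⟩ := S.exists_factor_truncY hT hx hy' (e.hom ≫ p')
  obtain ⟨b, hb⟩ := S.exists_factor_truncY hT' hx' hy (e.inv ≫ p)
  refine ⟨⟨a, b, S.ext_truncY hT hx hy ?_, S.ext_truncY hT' hx' hy' ?_⟩, ha⟩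
  · simp [reassoc_of% ha, hb]
  · simp [reassoc_of% hb, ha]

end Iso

end TStruct

section Equivariant

variable {G : Type*} [Group G]

def IsLinearization (F : G → C ⥤ C) (hFmul : ∀ g h : G, F (g * h) = F h ⋙ F g)
    (t : C) (τ : ∀ g : G, t ≅ (F g).obj t) : Prop :=
  ∀ g h : G, (τ (g * h)).hom =
    (τ g).hom ≫ (F g).map (τ h).hom ≫ eqToHom (by rw [hFmul g h]; rfl)

def IsEquivariant (F : G → C ⥤ C) {t t' : C} (τ : ∀ g : G, t ≅ (F g).obj t)
    (τ' : ∀ g : G, t' ≅ (F g).obj t') (f : t ⟶ t') : Prop :=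
  ∀ g : G, f ≫ (τ' g).hom = (τ g).hom ≫ (F g).map f

namespace IsLinearization

variable {D : Type*} [Category D] {F : G → D ⥤ D} {hFmul : ∀ g h : G, F (g * h) = F h ⋙ F g}

lemma exists_map_obj (Φ : D ⥤ D) (hΦ : ∀ g : G, Φ ⋙ F g = F g ⋙ Φ) {t : D}
    {τ : ∀ g : G, t ≅ (F g).obj t} (hτ : IsLinearization F hFmul t τ) :
    ∃ τ' : ∀ g : G, Φ.obj t ≅ (F g).obj (Φ.obj t), IsLinearization F hFmul _ τ' := by
  refine ⟨fun g => Φ.mapIso (τ g) ≪≫ eqToIso (Functor.congr_obj (hΦ g).symm t), ?_⟩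
  intro g h
  have hΦτ := Functor.congr_hom (hΦ g) (τ h).hom
  dsimp at hΦτ ⊢
  rw [hτ g h]
  simp only [Functor.map_comp, eqToHom_map, Category.assoc, hΦτ, eqToHom_trans,
    eqToHom_trans_assoc, eqToHom_refl, Category.id_comp]

lemma of_isEquivariant_left {x t : D} {ξ : ∀ g : G, x ≅ (F g).obj x}
    {τ : ∀ g : G, t ≅ (F g).obj t} (hτ : IsLinearization F hFmul t τ) {f : x ⟶ t}
    (hf : IsEquivariant F ξ τ f)
    (hcancel : ∀ (g : G) (a b : x ⟶ (F g).obj x), a ≫ (F g).map f = b ≫ (F g).map f → a = b) :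
    IsLinearization F hFmul x ξ := by
  intro g h
  refine hcancel (g * h) _ _ ?_
  rw [← hf, hτ g h, Functor.congr_hom (hFmul g h) f]
  simp only [Functor.comp_map, Category.assoc, eqToHom_trans_assoc, eqToHom_refl,
    Category.id_comp]
  rw [← Functor.map_comp_assoc, ← hf h, Functor.map_comp_assoc, reassoc_of% (hf g)]

lemma of_isEquivariant_right {t y : D} {τ : ∀ g : G, t ≅ (F g).obj t}
    {μ : ∀ g : G, y ≅ (F g).obj y} (hτ : IsLinearization F hFmul t τ) {p : t ⟶ y}
    (hp : IsEquivariant F τ μ p)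
    (hcancel : ∀ (g : G) (a b : y ⟶ (F g).obj y), p ≫ a = p ≫ b → a = b) :
    IsLinearization F hFmul y μ := by
  intro g h
  refine hcancel (g * h) _ _ ?_
  rw [hp, hτ g h, Functor.congr_hom (hFmul g h) p]
  simp only [Functor.comp_map, Category.assoc, eqToHom_trans_assoc, eqToHom_refl,
    Category.id_comp]
  rw [reassoc_of% (hp g), ← Functor.map_comp_assoc, ← hp h, Functor.map_comp_assoc]

end IsLinearization

theorem equivariant_t_structure_general (F : G → C ⥤ C)
    (hFmul : ∀ g h : G, F (g * h) = F h ⋙ F g)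
    (hshift : ∀ g : G, shiftFunctor C (1 : ℤ) ⋙ F g = F g ⋙ shiftFunctor C (1 : ℤ))
    -- each `F g` is exact (triangulated):
    (hdist : ∀ (g : G) {a b c : C} (f : a ⟶ b) (p : b ⟶ c) (q : c ⟶ a⟦(1 : ℤ)⟧),
      (Triangle.mk f p q ∈ distTriang C) →
      (Triangle.mk ((F g).map f) ((F g).map p)
        ((F g).map q ≫ eqToHom (congrArg (fun H : C ⥤ C => H.obj a) (hshift g)))
          ∈ distTriang C))
    (S : TStruct C)
    -- `(X, Y)` is `G`-invariant:
    (hGX : ∀ (g : G) (x : C), x ∈ S.X ↔ (F g).obj x ∈ S.X)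
    (hGY : ∀ (g : G) (y : C), y ∈ S.Y ↔ (F g).obj y ∈ S.Y) :
    -- (i) semi-orthogonality in `T^G`:
    (∀ (t t' : C) (τ : ∀ g : G, t ≅ (F g).obj t) (τ' : ∀ g : G, t' ≅ (F g).obj t'),
      IsLinearization F hFmul t τ → IsLinearization F hFmul t' τ' →
      t ∈ S.X → t' ∈ S.Y → ∀ f : t ⟶ t', IsEquivariant F τ τ' f → f = 0) ∧
    -- (ii) `X^G` is closed under suspension:
    (∀ (t : C) (τ : ∀ g : G, t ≅ (F g).obj t), IsLinearization F hFmul t τ →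
      t ∈ S.X → (t⟦(1 : ℤ)⟧ ∈ S.X) ∧
        ∃ τs : ∀ g : G, t⟦(1 : ℤ)⟧ ≅ (F g).obj (t⟦(1 : ℤ)⟧),
          IsLinearization F hFmul _ τs) ∧
    -- (iii) equivariant truncation triangles:
    (∀ (t : C) (τ : ∀ g : G, t ≅ (F g).obj t), IsLinearization F hFmul t τ →
      ∃ (x y : C) (ξ : ∀ g : G, x ≅ (F g).obj x) (μ : ∀ g : G, y ≅ (F g).obj y)
        (f : x ⟶ t) (p : t ⟶ y) (q : y ⟶ x⟦(1 : ℤ)⟧),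
        IsLinearization F hFmul x ξ ∧ IsLinearization F hFmul y μ ∧
        x ∈ S.X ∧ y ∈ S.Y ∧ (Triangle.mk f p q ∈ distTriang C) ∧
        IsEquivariant F ξ τ f ∧ IsEquivariant F τ μ p) := by
  refine ⟨fun t t' _ _ _ _ ht ht' f _ => S.hom_zero ht ht' f,
    fun t _ hτ ht => ⟨S.shift_mem t ht, hτ.exists_map_obj _ hshift⟩, ?_⟩
  intro t τ hτ
  obtain ⟨x, y, f, p, q, hx, hy, hT⟩ := S.trunc t
  have hTg := fun g : G => hdist g f p q hT
  have hxg := fun g : G => (hGX g x).1 hx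
  have hyg := fun g : G => (hGY g y).1 hy
  choose ξ hξ using fun g => S.exists_iso_truncX hT (hTg g) hx hy (hxg g) (hyg g) (τ g)
  choose μ hμ using fun g => S.exists_iso_truncY hT (hTg g) hx hy (hxg g) (hyg g) (τ g)
  have hf : IsEquivariant F ξ τ f := fun g => (hξ g).symm
  refine ⟨x, y, ξ, μ, f, p, q, hτ.of_isEquivariant_left hf ?_,
    hτ.of_isEquivariant_right hμ ?_, hx, hy, hT, hf, hμ⟩
  · exact fun g _ _ => S.ext_truncX (hTg g) hx (hyg g)
  · exact fun g _ _ => S.ext_truncY hT hx (hyg g)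

/-- Proposition: a `G`-invariant t-structure `(X, Y)` induces a t-structure `(X^G, Y^G)`
on the equivariant category `T^G`: equivariant morphisms from `X`-objects to `Y`-objects
vanish, `X^G` is stable under suspension, and every `G`-object admits an equivariant
truncation triangle with linearised truncations. -/
theorem equivariant_t_structure (F : G → C ⥤ C) [Finite G]
    (hF1 : F 1 = 𝟭 C)
    (hFmul : ∀ g h : G, F (g * h) = F h ⋙ F g)
    (hFequiv : ∀ g : G, (F g).IsEquivalence)
    (hshift : ∀ g : G, shiftFunctor C (1 : ℤ) ⋙ F g = F g ⋙ shiftFunctor C (1 : ℤ))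
    -- each `F g` is exact (triangulated):
    (hdist : ∀ (g : G) {a b c : C} (f : a ⟶ b) (p : b ⟶ c) (q : c ⟶ a⟦(1 : ℤ)⟧),
      (Triangle.mk f p q ∈ distTriang C) →
      (Triangle.mk ((F g).map f) ((F g).map p)
        ((F g).map q ≫ eqToHom (congrArg (fun H : C ⥤ C => H.obj a) (hshift g)))
          ∈ distTriang C))
    (S : TStruct C)
    -- `(X, Y)` is `G`-invariant:
    (hGX : ∀ (g : G) (x : C), x ∈ S.X ↔ (F g).obj x ∈ S.X)
    (hGY : ∀ (g : G) (y : C), y ∈ S.Y ↔ (F g).obj y ∈ S.Y) :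
    -- (i) semi-orthogonality in `T^G`:
    (∀ (t t' : C) (τ : ∀ g : G, t ≅ (F g).obj t) (τ' : ∀ g : G, t' ≅ (F g).obj t'),
      IsLinearization F hFmul t τ → IsLinearization F hFmul t' τ' →
      t ∈ S.X → t' ∈ S.Y → ∀ f : t ⟶ t', IsEquivariant F τ τ' f → f = 0) ∧
    -- (ii) `X^G` is closed under suspension:
    (∀ (t : C) (τ : ∀ g : G, t ≅ (F g).obj t), IsLinearization F hFmul t τ →
      t ∈ S.X → (t⟦(1 : ℤ)⟧ ∈ S.X) ∧
        ∃ τs : ∀ g : G, t⟦(1 : ℤ)⟧ ≅ (F g).obj (t⟦(1 : ℤ)⟧),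
          IsLinearization F hFmul _ τs) ∧
    -- (iii) equivariant truncation triangles:
    (∀ (t : C) (τ : ∀ g : G, t ≅ (F g).obj t), IsLinearization F hFmul t τ →
      ∃ (x y : C) (ξ : ∀ g : G, x ≅ (F g).obj x) (μ : ∀ g : G, y ≅ (F g).obj y)
        (f : x ⟶ t) (p : t ⟶ y) (q : y ⟶ x⟦(1 : ℤ)⟧),
        IsLinearization F hFmul x ξ ∧ IsLinearization F hFmul y μ ∧
        x ∈ S.X ∧ y ∈ S.Y ∧ (Triangle.mk f p q ∈ distTriang C) ∧
        IsEquivariant F ξ τ f ∧ IsEquivariant F τ μ p) :=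
  equivariant_t_structure_general F hFmul hshift hdist S hGX hGY

end Equivariant
end
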